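/- Let M be a vertex of B_d^ι and Γ the associated bipartite multigraph with adjacency matrix 2M. If C is a cycle of Γ containing no fixed point of the involution ι (acting as (i,L) ↦ (φ(i),L), (j,R) ↦ (ψ(j),R)), then C has length 2. -/

import Mathlib

/-- The `ι`-invariant Birkhoff polytope for the involution `(ιM)_{ij} = M_{φ(i)ψ(j)}`. -/
def invBirkhoff (d : ℕ) (φ ψ : Equiv.Perm (Fin d)) : Set (Matrix (Fin d) (Fin d) ℝ) :=
  {M | M ∈ doublyStochastic ℝ (Fin d) ∧ (fun i j => M (φ i) (ψ j)) = M}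

/-- The adjacency function of the bipartite multigraph `Γ` with adjacency matrix `2M`. -/
def graphAdj {d : ℕ} (M : Matrix (Fin d) (Fin d) ℝ) :
    (Fin d ⊕ Fin d) → (Fin d ⊕ Fin d) → ℝ
  | Sum.inl i, Sum.inr j => 2 * M i j
  | Sum.inr j, Sum.inl i => 2 * M i j
  | _, _ => 0

/-- A cycle of `Γ` (an injective closed walk `z : ZMod n → [d] × {L,R}`) that contains
no fixed point of the involution `ι = Sum.map φ ψ` has length `2`. -/
theorem stmt_12 (d : ℕ) (φ ψ : Equiv.Perm (Fin d)) (hφ : φ * φ = 1) (hψ : ψ * ψ = 1)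
    (M : Matrix (Fin d) (Fin d) ℝ)
    (hM : M ∈ Set.extremePoints ℝ (invBirkhoff d φ ψ))
    (n : ℕ) (hn : 2 ≤ n) (z : ZMod n → Fin d ⊕ Fin d)
    (hz : Function.Injective z)
    (hadj : ∀ k, 1 ≤ graphAdj M (z k) (z (k + 1)))
    (hfix : ∀ k, Sum.map φ ψ (z k) ≠ z k) :
    n = 2 := by
  by_contra hne
  have hn3 : 3 ≤ n := by omega
  haveI : NeZero n := ⟨by omega⟩
  classical
  have hφ2 : ∀ i, φ (φ i) = i := fun i => by
    have := congrArg (fun p : Equiv.Perm (Fin d) => p i) hφ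
    simpa using this
  have hψ2 : ∀ j, ψ (ψ j) = j := fun j => by
    have := congrArg (fun p : Equiv.Perm (Fin d) => p j) hψ
    simpa using this
  have hι2 : ∀ x : Fin d ⊕ Fin d, Sum.map φ ψ (Sum.map φ ψ x) = x := by
    rintro (i | j) <;> simp [hφ2, hψ2]
  -- basic facts about M
  have hMds : M ∈ doublyStochastic ℝ (Fin d) := hM.1.1
  have hMinv : ∀ i j, M (φ i) (ψ j) = M i j := fun i j =>
    congrFun (congrFun hM.1.2 i) j
  have hM0 : ∀ i j, 0 ≤ M i j := fun i j => (mem_doublyStochastic_iff_sum.1 hMds).1 i j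
  have hMrow : ∀ i, ∑ j, M i j = 1 := (mem_doublyStochastic_iff_sum.1 hMds).2.1
  have hMcol : ∀ j, ∑ i, M i j = 1 := (mem_doublyStochastic_iff_sum.1 hMds).2.2
  -- small elements of ZMod n
  have two_ne : (2 : ZMod n) ≠ 0 := by
    have : ((2:ℕ) : ZMod n) ≠ 0 := by
      rw [Ne, ZMod.natCast_eq_zero_iff]
      intro hd; have := Nat.le_of_dvd (by norm_num) hd; omega
    simpa using this
  have one_ne : (1 : ZMod n) ≠ 0 := by
    have : ((1:ℕ) : ZMod n) ≠ 0 := by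
      rw [Ne, ZMod.natCast_eq_zero_iff]
      intro hd; have := Nat.le_of_dvd (by norm_num) hd; omega
    simpa using this
  -- edge data
  have hE : ∀ k : ZMod n, ∃ i j, (z k = Sum.inl i ∧ z (k+1) = Sum.inr j) ∨
      (z k = Sum.inr j ∧ z (k+1) = Sum.inl i) := by
    intro k
    have h := hadj k
    rcases h1 : z k with i | j <;> rcases h2 : z (k+1) with i' | j' <;>
      rw [h1, h2] at h
    · simp [graphAdj] at h; linarith
    · exact ⟨i, j', Or.inl ⟨rfl, rfl⟩⟩
    · exact ⟨i', j, Or.inr ⟨rfl, rfl⟩⟩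
    · simp [graphAdj] at h; linarith
  choose ik jk hk using hE
  have hMhalf : ∀ k, (1:ℝ)/2 ≤ M (ik k) (jk k) := by
    intro k
    have h := hadj k
    rcases hk k with ⟨h1, h2⟩ | ⟨h1, h2⟩ <;> rw [h1, h2] at h <;>
      simp only [graphAdj] at h <;> linarith
  have hik_iff : ∀ k i, ik k = i ↔ (z k = Sum.inl i ∨ z (k+1) = Sum.inl i) := by
    intro k i
    constructor
    · rintro rfl
      rcases hk k with ⟨h1, _⟩ | ⟨_, h2⟩
      · exact Or.inl h1
      · exact Or.inr h2
    · rintro (h | h) <;> rcases hk k with ⟨h1, h2⟩ | ⟨h1, h2⟩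
      · exact (Sum.inl.inj (h1.symm.trans h)).symm.symm
      · exact absurd (h1.symm.trans h) (by simp)
      · exact absurd (h2.symm.trans h) (by simp)
      · exact Sum.inl.inj (h2.symm.trans h)
  have hjk_iff : ∀ k j, jk k = j ↔ (z k = Sum.inr j ∨ z (k+1) = Sum.inr j) := by
    intro k j
    constructor
    · rintro rfl
      rcases hk k with ⟨_, h2⟩ | ⟨h1, _⟩
      · exact Or.inr h2
      · exact Or.inl h1
    · rintro (h | h) <;> rcases hk k with ⟨h1, h2⟩ | ⟨h1, h2⟩
      · exact absurd (h1.symm.trans h) (by simp)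
      · exact Sum.inr.inj (h1.symm.trans h)
      · exact Sum.inr.inj (h2.symm.trans h)
      · exact absurd (h2.symm.trans h) (by simp)
  -- an edge is determined by its endpoints
  have u1 : ∀ k₀ k, ik k = ik k₀ → jk k = jk k₀ → k = k₀ := by
    intro k₀ k hi hj
    rcases hk k with ⟨h1, h2⟩ | ⟨h1, h2⟩ <;> rcases hk k₀ with ⟨g1, g2⟩ | ⟨g1, g2⟩
    · exact hz (h1.trans (by rw [hi, ← g1]))
    · have e1 : k = k₀ + 1 := hz (h1.trans (by rw [hi, ← g2]))
      have e2 : k + 1 = k₀ := hz (h2.trans (by rw [hj, ← g1]))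
      exfalso; apply two_ne; linear_combination e2 - e1
    · have e1 : k + 1 = k₀ := hz (h2.trans (by rw [hi, ← g1]))
      have e2 : k = k₀ + 1 := hz (h1.trans (by rw [hj, ← g2]))
      exfalso; apply two_ne; linear_combination e1 - e2
    · exact hz (h1.trans (by rw [hj, ← g1]))
  -- sides alternate
  have halt : ∀ k, (z (k+1)).isLeft = !(z k).isLeft := by
    intro k
    rcases hk k with ⟨h1, h2⟩ | ⟨h1, h2⟩ <;> rw [h1, h2] <;> simp
  have hLnat : ∀ (k : ZMod n) (m : ℕ),
      (z (k + (m:ℕ))).isLeft = if m % 2 = 1 then !(z k).isLeft else (z k).isLeft := by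
    intro k m
    induction m with
    | zero => simp
    | succ m ih =>
      have hc : ((m+1 : ℕ) : ZMod n) = (m : ZMod n) + 1 := by push_cast; ring
      rw [hc, ← add_assoc, halt, ih]
      by_cases h : m % 2 = 1
      · have h' : ¬ ((m+1) % 2 = 1) := by omega
        simp [h, h']
      · have h' : (m+1) % 2 = 1 := by omega
        simp [h, h']
  have hn2 : n % 2 = 0 := by
    by_contra h2
    have h := hLnat 0 n
    rw [ZMod.natCast_self, add_zero] at h
    rw [if_pos (by omega)] at h
    simp at h
    rcases hz0 : z 0 with a | a <;> simp [hz0] at h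
  have hdvd2 : 2 ∣ n := Nat.dvd_of_mod_eq_zero hn2
  -- the alternating sign function
  set σ : ZMod n → ℝ := fun k => if k.val % 2 = 0 then 1 else -1 with hσdef
  have hσ0 : σ 0 = 1 := by simp [hσdef]
  have hσpm : ∀ k, σ k = 1 ∨ σ k = -1 := fun k => by
    by_cases h : k.val % 2 = 0 <;> simp [hσdef, h]
  have hσne : ∀ k, σ k ≠ 0 := fun k => by
    rcases hσpm k with h | h <;> rw [h] <;> norm_num
  have hσalt : ∀ k, σ (k + 1) = -σ k := by
    intro k
    have h1v : (1 : ZMod n).val = 1 := by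
      have : ((1:ℕ) : ZMod n).val = 1 % n := ZMod.val_natCast n 1
      simpa [Nat.mod_eq_of_lt (by omega : 1 < n)] using this
    have hv : (k + 1).val % 2 = (k.val + 1) % 2 := by
      rw [ZMod.val_add, h1v, Nat.mod_mod_of_dvd _ hdvd2]
    by_cases h : k.val % 2 = 0
    · have h' : ¬((k+1).val % 2 = 0) := by omega
      simp [hσdef, h, h']
    · have h' : (k+1).val % 2 = 0 := by omega
      simp [hσdef, h, h']
  have hσshift : ∀ (k : ZMod n) (m : ℕ), m % 2 = 0 → σ (k + (m:ℕ)) = σ k := by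
    intro k m hm
    have hv : (k + (m:ℕ)).val % 2 = k.val % 2 := by
      rw [ZMod.val_add, ZMod.val_natCast, Nat.mod_mod_of_dvd _ hdvd2]
      have := Nat.mod_mod_of_dvd m hdvd2
      omega
    by_cases h : k.val % 2 = 0
    · have h' : (k + (m:ℕ)).val % 2 = 0 := by omega
      simp [hσdef, h, h']
    · have h' : ¬((k + (m:ℕ)).val % 2 = 0) := by omega
      simp [hσdef, h, h']
  -- the perturbation matrix
  set P : Fin d → Fin d → ℝ :=
    fun i j => ∑ k : ZMod n, if ik k = i ∧ jk k = j then σ k else 0 with hPdef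
  set Q : Fin d → Fin d → ℝ := fun i j => P i j + P (φ i) (ψ j) with hQdef
  have hProw : ∀ i, ∑ j, P i j = 0 := by
    intro i
    simp only [hPdef]
    rw [Finset.sum_comm]
    have inner : ∀ k : ZMod n, (∑ j, if ik k = i ∧ jk k = j then σ k else 0)
        = if ik k = i then σ k else 0 := by
      intro k
      by_cases h : ik k = i
      · simp only [h, true_and]
        rw [Finset.sum_ite_eq Finset.univ (jk k) (fun _ => σ k)]
        simp
      · simp [h]
    rw [Finset.sum_congr rfl fun k _ => inner k]
    by_cases hex : ∃ m, z m = Sum.inl i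
    · obtain ⟨m, hm⟩ := hex
      have hmm : ¬ (m = m - 1) := by
        intro h; apply one_ne; linear_combination h
      have hcond : ∀ k : ZMod n, (ik k = i) ↔ (k = m ∨ k = m - 1) := by
        intro k
        rw [hik_iff]
        constructor
        · rintro (h | h)
          · exact Or.inl (hz (h.trans hm.symm))
          · have e := hz (h.trans hm.symm)
            exact Or.inr (by rw [← e]; ring)
        · rintro (rfl | rfl)
          · exact Or.inl hm
          · right; rw [sub_add_cancel]; exact hm
      calc (∑ k : ZMod n, if ik k = i then σ k else 0)
          = ∑ k : ZMod n, ((if k = m then σ k else 0) + (if k = m - 1 then σ k else 0)) := by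
            refine Finset.sum_congr rfl fun k _ => ?_
            rw [if_congr (hcond k) rfl rfl]
            by_cases h1 : k = m
            · subst h1; simp only [true_or, if_true, if_pos rfl]
              rw [if_neg hmm]; ring
            · by_cases h2 : k = m - 1
              · subst h2
                rw [if_pos (Or.inr rfl), if_neg h1, if_pos rfl]; ring
              · rw [if_neg (by tauto), if_neg h1, if_neg h2]; ring
        _ = σ m + σ (m - 1) := by
            rw [Finset.sum_add_distrib,
              Finset.sum_ite_eq' Finset.univ m (fun k => σ k),
              Finset.sum_ite_eq' Finset.univ (m-1) (fun k => σ k)]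
            simp
        _ = 0 := by
            have h := hσalt (m - 1)
            rw [sub_add_cancel] at h
            rw [h]; ring
    · push_neg at hex
      refine Finset.sum_eq_zero fun k _ => ?_
      rw [if_neg]
      intro h
      rcases (hik_iff k i).1 h with h | h
      · exact hex _ h
      · exact hex _ h
  have hPcol : ∀ j, ∑ i, P i j = 0 := by
    intro j
    simp only [hPdef]
    rw [Finset.sum_comm]
    have inner : ∀ k : ZMod n, (∑ i, if ik k = i ∧ jk k = j then σ k else 0)
        = if jk k = j then σ k else 0 := by
      intro k
      by_cases h : jk k = j
      · simp only [h, and_true]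
        rw [Finset.sum_ite_eq Finset.univ (ik k) (fun _ => σ k)]
        simp
      · simp [h]
    rw [Finset.sum_congr rfl fun k _ => inner k]
    by_cases hex : ∃ m, z m = Sum.inr j
    · obtain ⟨m, hm⟩ := hex
      have hmm : ¬ (m = m - 1) := by
        intro h; apply one_ne; linear_combination h
      have hcond : ∀ k : ZMod n, (jk k = j) ↔ (k = m ∨ k = m - 1) := by
        intro k
        rw [hjk_iff]
        constructor
        · rintro (h | h)
          · exact Or.inl (hz (h.trans hm.symm))
          · have e := hz (h.trans hm.symm)
            exact Or.inr (by rw [← e]; ring)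
        · rintro (rfl | rfl)
          · exact Or.inl hm
          · right; rw [sub_add_cancel]; exact hm
      calc (∑ k : ZMod n, if jk k = j then σ k else 0)
          = ∑ k : ZMod n, ((if k = m then σ k else 0) + (if k = m - 1 then σ k else 0)) := by
            refine Finset.sum_congr rfl fun k _ => ?_
            rw [if_congr (hcond k) rfl rfl]
            by_cases h1 : k = m
            · subst h1; simp only [true_or, if_true, if_pos rfl]
              rw [if_neg hmm]; ring
            · by_cases h2 : k = m - 1
              · subst h2
                rw [if_pos (Or.inr rfl), if_neg h1, if_pos rfl]; ring
              · rw [if_neg (by tauto), if_neg h1, if_neg h2]; ring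
        _ = σ m + σ (m - 1) := by
            rw [Finset.sum_add_distrib,
              Finset.sum_ite_eq' Finset.univ m (fun k => σ k),
              Finset.sum_ite_eq' Finset.univ (m-1) (fun k => σ k)]
            simp
        _ = 0 := by
            have h := hσalt (m - 1)
            rw [sub_add_cancel] at h
            rw [h]; ring
    · push_neg at hex
      refine Finset.sum_eq_zero fun k _ => ?_
      rw [if_neg]
      intro h
      rcases (hjk_iff k j).1 h with h | h
      · exact hex _ h
      · exact hex _ h
  have hPsupp : ∀ i j, P i j ≠ 0 → (1:ℝ)/2 ≤ M i j := by
    intro i j h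
    obtain ⟨k, -, hk0⟩ := Finset.exists_ne_zero_of_sum_ne_zero h
    by_cases hc : ik k = i ∧ jk k = j
    · rw [← hc.1, ← hc.2]; exact hMhalf k
    · rw [if_neg hc] at hk0; exact absurd rfl hk0
  have hPbound : ∀ i j, |P i j| ≤ (n : ℝ) := by
    intro i j
    calc |P i j| ≤ ∑ k : ZMod n, |if ik k = i ∧ jk k = j then σ k else 0| :=
          Finset.abs_sum_le_sum_abs _ _
      _ ≤ ∑ _k : ZMod n, (1:ℝ) := by
          apply Finset.sum_le_sum
          intro k _
          by_cases hc : ik k = i ∧ jk k = j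
          · rw [if_pos hc]; rcases hσpm k with h | h <;> rw [h] <;> norm_num
          · rw [if_neg hc]; norm_num
      _ = (n : ℝ) := by simp [ZMod.card]
  have hQrow : ∀ i, ∑ j, Q i j = 0 := by
    intro i
    simp only [hQdef]
    rw [Finset.sum_add_distrib, hProw i]
    rw [Equiv.sum_comp ψ (fun j => P (φ i) j), hProw (φ i)]
    ring
  have hQcol : ∀ j, ∑ i, Q i j = 0 := by
    intro j
    simp only [hQdef]
    rw [Finset.sum_add_distrib, hPcol j]
    rw [Equiv.sum_comp φ (fun i => P i (ψ j)), hPcol (ψ j)]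
    ring
  have hQinv : ∀ i j, Q (φ i) (ψ j) = Q i j := by
    intro i j
    simp only [hQdef]
    rw [hφ2, hψ2]; ring
  have hQsupp : ∀ i j, Q i j ≠ 0 → (1:ℝ)/2 ≤ M i j := by
    intro i j h
    simp only [hQdef] at h
    by_cases h1 : P i j = 0
    · rw [h1, zero_add] at h
      have := hPsupp _ _ h
      rwa [hMinv] at this
    · exact hPsupp _ _ h1
  have hQbound : ∀ i j, |Q i j| ≤ 2 * n := by
    intro i j
    simp only [hQdef]
    calc |P i j + P (φ i) (ψ j)| ≤ |P i j| + |P (φ i) (ψ j)| := abs_add_le _ _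
      _ ≤ (n:ℝ) + n := add_le_add (hPbound _ _) (hPbound _ _)
      _ = 2 * n := by ring
  -- the perturbation argument: extremality forces Q = 0
  have hnR : (0:ℝ) < n := by exact_mod_cast (by omega : 0 < n)
  set ε : ℝ := 1 / (4 * n) with hεdef
  have hεpos : 0 < ε := by rw [hεdef]; positivity
  set Qm : Matrix (Fin d) (Fin d) ℝ := Matrix.of Q with hQmdef
  clear_value σ P Q ε Qm
  have key : ∀ i j, Q i j = 0 := by
    have hmem : ∀ s : ℝ, |s| ≤ ε → (M + s • Qm) ∈ invBirkhoff d φ ψ := by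
      intro s hs
      have habs : ∀ i j, |s * Q i j| ≤ 1/2 := by
        intro i j
        have h1 : |s| * |Q i j| ≤ ε * (2 * n) :=
          mul_le_mul hs (hQbound i j) (abs_nonneg _) hεpos.le
        have h2 : ε * (2 * n) = 1/2 := by
          rw [hεdef]; field_simp; ring
        rw [abs_mul]; linarith
      constructor
      · rw [mem_doublyStochastic_iff_sum]
        refine ⟨?_, ?_, ?_⟩
        · intro i j
          simp only [Matrix.add_apply, Matrix.smul_apply, hQmdef, Matrix.of_apply,
            smul_eq_mul]
          by_cases h0 : Q i j = 0
          · rw [h0, mul_zero, add_zero]; exact hM0 i j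
          · have h1 := hQsupp i j h0
            have h2 := (abs_le.1 (habs i j)).1
            have h3 : (0:ℝ) ≤ M i j + s * Q i j := by linarith
            exact h3
        · intro i
          simp only [Matrix.add_apply, Matrix.smul_apply, hQmdef, Matrix.of_apply,
            smul_eq_mul]
          rw [Finset.sum_add_distrib, hMrow i, ← Finset.mul_sum, hQrow i, mul_zero, add_zero]
        · intro j
          simp only [Matrix.add_apply, Matrix.smul_apply, hQmdef, Matrix.of_apply,
            smul_eq_mul]
          rw [Finset.sum_add_distrib, hMcol j, ← Finset.mul_sum, hQcol j, mul_zero, add_zero]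
      · funext i j
        simp only [Matrix.add_apply, Matrix.smul_apply, hQmdef, Matrix.of_apply, smul_eq_mul]
        rw [hMinv, hQinv]
    have h1 : M + ε • Qm ∈ invBirkhoff d φ ψ := hmem ε (by rw [abs_of_pos hεpos])
    have h2 : M + (-ε) • Qm ∈ invBirkhoff d φ ψ := hmem (-ε) (by rw [abs_neg, abs_of_pos hεpos])
    have hseg : M ∈ openSegment ℝ (M + ε • Qm) (M + (-ε) • Qm) := by
      refine ⟨1/2, 1/2, by norm_num, by norm_num, by norm_num, ?_⟩
      ext i j
      simp only [Matrix.add_apply, Matrix.smul_apply, smul_eq_mul]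
      ring
    have hxx := hM.2 h1 h2 hseg
    have h3 : M + ε • Qm = M := hxx
    have h4 : ε • Qm = 0 := by
      have := congrArg (fun X => X - M) h3
      simpa [add_sub_cancel_left] using this
    intro i j
    have h5 : ε • Qm i j = 0 := by
      have := congrFun (congrFun h4 i) j
      simpa using this
    have h6 : ε * Q i j = 0 := by simpa [hQmdef, smul_eq_mul] using h5
    rcases mul_eq_zero.1 h6 with h | h
    · exact absurd h hεpos.ne'
    · exact h
  -- Now produce a nonzero entry of Q, contradiction.
  have hPedge : ∀ a : ZMod n, P (ik a) (jk a) = σ a := by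
    intro a
    simp only [hPdef]
    have hcond : ∀ k : ZMod n, (ik k = ik a ∧ jk k = jk a) ↔ k = a := fun k =>
      ⟨fun h => u1 a k h.1 h.2, by rintro rfl; exact ⟨rfl, rfl⟩⟩
    rw [Finset.sum_congr rfl fun k _ => if_congr (hcond k) rfl rfl,
      Finset.sum_ite_eq' Finset.univ a (fun k => σ k)]
    simp
  by_cases honto : ∀ k, ∃ l, z l = Sum.map φ ψ (z k)
  · -- Case B : ι maps the cycle onto itself
    choose f hf using honto
    have hfinj : Function.Injective f := by
      intro a b hab
      apply hz
      have h1 := congrArg z hab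
      rw [hf, hf] at h1
      have h2 := congrArg (Sum.map φ ψ) h1
      rwa [hι2, hι2] at h2
    have hff : ∀ k, f (f k) = k := fun k => hz (by rw [hf, hf, hι2])
    have hfnofix : ∀ k, f k ≠ k := fun k h => hfix k (by rw [← hf, h])
    have suppRow : ∀ (k : ZMod n) i j, z k = Sum.inl i → 0 < M i j →
        z (k+1) = Sum.inr j ∨ z (k-1) = Sum.inr j := by
      intro k i j hzk hMij
      have h2 : z (k+1) = Sum.inr (jk k) := by
        rcases hk k with ⟨h1, h2⟩ | ⟨h1, h2⟩
        · exact h2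
        · exact absurd (hzk.symm.trans h1) (by simp)
      have h3 : z (k-1) = Sum.inr (jk (k-1)) := by
        rcases hk (k-1) with ⟨h1', h2'⟩ | ⟨h1', h2'⟩
        · rw [sub_add_cancel] at h2'
          exact absurd (hzk.symm.trans h2') (by simp)
        · exact h1'
      have hiik : ik k = i := (hik_iff k i).2 (Or.inl hzk)
      have hiik' : ik (k-1) = i := (hik_iff (k-1) i).2 (Or.inr (by rwa [sub_add_cancel]))
      have hj1 := hMhalf k
      rw [hiik] at hj1
      have hj2 := hMhalf (k-1)
      rw [hiik'] at hj2
      have hjj : jk k ≠ jk (k-1) := by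
        intro h
        have e : z (k+1) = z (k-1) := by rw [h2, h3, h]
        have e2 := hz e
        apply two_ne; linear_combination e2
      by_cases e1 : j = jk k
      · left; rw [e1]; exact h2
      by_cases e2 : j = jk (k-1)
      · right; rw [e2]; exact h3
      exfalso
      have hsub : ∑ j' ∈ ({jk k, jk (k-1), j} : Finset (Fin d)), M i j' ≤ ∑ j', M i j' :=
        Finset.sum_le_sum_of_subset_of_nonneg (Finset.subset_univ _)
          (fun x _ _ => hM0 i x)
      rw [Finset.sum_insert (by
            simp only [Finset.mem_insert, Finset.mem_singleton]
            push_neg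
            exact ⟨hjj, fun h => e1 h.symm⟩),
          Finset.sum_insert (by
            simp only [Finset.mem_singleton]
            exact fun h => e2 h.symm),
          Finset.sum_singleton, hMrow i] at hsub
      linarith
    have suppCol : ∀ (k : ZMod n) i j, z k = Sum.inr j → 0 < M i j →
        z (k+1) = Sum.inl i ∨ z (k-1) = Sum.inl i := by
      intro k i j hzk hMij
      have h2 : z (k+1) = Sum.inl (ik k) := by
        rcases hk k with ⟨h1, h2⟩ | ⟨h1, h2⟩
        · exact absurd (hzk.symm.trans h1) (by simp)
        · exact h2
      have h3 : z (k-1) = Sum.inl (ik (k-1)) := by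
        rcases hk (k-1) with ⟨h1', h2'⟩ | ⟨h1', h2'⟩
        · exact h1'
        · rw [sub_add_cancel] at h2'
          exact absurd (hzk.symm.trans h2') (by simp)
      have hjjk : jk k = j := (hjk_iff k j).2 (Or.inl hzk)
      have hjjk' : jk (k-1) = j := (hjk_iff (k-1) j).2 (Or.inr (by rwa [sub_add_cancel]))
      have hj1 := hMhalf k
      rw [hjjk] at hj1
      have hj2 := hMhalf (k-1)
      rw [hjjk'] at hj2
      have hii : ik k ≠ ik (k-1) := by
        intro h
        have e : z (k+1) = z (k-1) := by rw [h2, h3, h]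
        have e2 := hz e
        apply two_ne; linear_combination e2
      by_cases e1 : i = ik k
      · left; rw [e1]; exact h2
      by_cases e2 : i = ik (k-1)
      · right; rw [e2]; exact h3
      exfalso
      have hsub : ∑ i' ∈ ({ik k, ik (k-1), i} : Finset (Fin d)), M i' j ≤ ∑ i', M i' j :=
        Finset.sum_le_sum_of_subset_of_nonneg (Finset.subset_univ _)
          (fun x _ _ => hM0 x j)
      rw [Finset.sum_insert (by
            simp only [Finset.mem_insert, Finset.mem_singleton]
            push_neg
            exact ⟨hii, fun h => e1 h.symm⟩),
          Finset.sum_insert (by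
            simp only [Finset.mem_singleton]
            exact fun h => e2 h.symm),
          Finset.sum_singleton, hMcol j] at hsub
      linarith
    have fstep : ∀ k, f (k+1) = f k + 1 ∨ f (k+1) = f k - 1 := by
      intro k
      rcases hk k with ⟨h1, h2⟩ | ⟨h1, h2⟩
      · have e1 : z (f k) = Sum.inl (φ (ik k)) := by rw [hf, h1]; simp
        have e2 : z (f (k+1)) = Sum.inr (ψ (jk k)) := by rw [hf, h2]; simp
        have hpos : 0 < M (φ (ik k)) (ψ (jk k)) := by
          rw [hMinv]; linarith [hMhalf k]
        rcases suppRow (f k) _ _ e1 hpos with h | h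
        · left; exact hz (e2.trans h.symm)
        · right; exact hz (e2.trans h.symm)
      · have e1 : z (f k) = Sum.inr (ψ (jk k)) := by rw [hf, h1]; simp
        have e2 : z (f (k+1)) = Sum.inl (φ (ik k)) := by rw [hf, h2]; simp
        have hpos : 0 < M (φ (ik k)) (ψ (jk k)) := by
          rw [hMinv]; linarith [hMhalf k]
        rcases suppCol (f k) _ _ e1 hpos with h | h
        · left; exact hz (e2.trans h.symm)
        · right; exact hz (e2.trans h.symm)
    have hdir : ∀ k, f (k+1) = f k + 1 → f (k+1+1) = f (k+1) + 1 := by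
      intro k h
      rcases fstep (k+1) with h' | h'
      · exact h'
      · exfalso
        have e : f (k+1+1) = f k := by rw [h', h]; ring
        have e2 := hfinj e
        apply two_ne; linear_combination e2
    have hdir' : ∀ k, f (k+1) = f k - 1 → f (k+1+1) = f (k+1) - 1 := by
      intro k h
      rcases fstep (k+1) with h' | h'
      · exfalso
        have e : f (k+1+1) = f k := by rw [h', h]; ring
        have e2 := hfinj e
        apply two_ne; linear_combination e2
      · exact h'
    have hLf : ∀ k, (z (f k)).isLeft = (z k).isLeft := fun k => by rw [hf]; simp
    have hveven : (f 0).val % 2 = 0 := by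
      by_contra hodd
      have h := hLnat 0 ((f 0).val)
      rw [zero_add, ZMod.natCast_zmod_val] at h
      rw [if_pos (by omega), hLf 0] at h
      simp at h
      rcases hz0 : z 0 with a | a <;> simp [hz0] at h
    rcases fstep 0 with hd | hd
    · -- translation case: Q has a nonzero entry at the image of edge 0
      have hstep : ∀ m : ℕ, f ((m : ZMod n) + 1) = f (m : ZMod n) + 1 := by
        intro m
        induction m with
        | zero => simpa using hd
        | succ m ih =>
          have hc : ((m+1 : ℕ) : ZMod n) = (m : ZMod n) + 1 := by push_cast; ring
          rw [hc]
          exact hdir _ ih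
      have haff : ∀ m : ℕ, f (m : ZMod n) = (m : ZMod n) + f 0 := by
        intro m
        induction m with
        | zero => simp
        | succ m ih =>
          have hc : ((m+1 : ℕ) : ZMod n) = (m : ZMod n) + 1 := by push_cast; ring
          rw [hc, hstep m, ih]; ring
      have haffall : ∀ k : ZMod n, f k = k + f 0 := by
        intro k
        have h := haff k.val
        rwa [ZMod.natCast_zmod_val] at h
      have hza : z (f 0) = Sum.map φ ψ (z 0) := hf 0
      have hza1 : z (f 0 + 1) = Sum.map φ ψ (z (0 + 1)) := by
        have h1 := hf (0 + 1)
        rw [haffall (0 + 1)] at h1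
        rwa [show (0:ZMod n) + 1 + f 0 = f 0 + 1 by ring] at h1
      have hika : ik (f 0) = φ (ik 0) := by
        rcases hk 0 with ⟨h1, h2⟩ | ⟨h1, h2⟩
        · exact (hik_iff (f 0) _).2 (Or.inl (by rw [hza, h1]; simp))
        · exact (hik_iff (f 0) _).2 (Or.inr (by rw [hza1, h2]; simp))
      have hjka : jk (f 0) = ψ (jk 0) := by
        rcases hk 0 with ⟨h1, h2⟩ | ⟨h1, h2⟩
        · exact (hjk_iff (f 0) _).2 (Or.inr (by rw [hza1, h2]; simp))
        · exact (hjk_iff (f 0) _).2 (Or.inl (by rw [hza, h1]; simp))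
      have e1 : P (φ (ik 0)) (ψ (jk 0)) = σ (f 0) := by
        rw [← hika, ← hjka]; exact hPedge (f 0)
      have e2 : P (φ (φ (ik 0))) (ψ (ψ (jk 0))) = σ 0 := by
        rw [hφ2, hψ2]; exact hPedge 0
      have hσa : σ (f 0) = σ 0 := by
        have h := hσshift 0 (f 0).val hveven
        rwa [zero_add, ZMod.natCast_zmod_val] at h
      have hzero := key (φ (ik 0)) (ψ (jk 0))
      simp only [hQdef] at hzero
      rw [e1, e2, hσa, hσ0] at hzero
      norm_num at hzero
    · -- reflection case: produces a fixed point, contradiction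
      have hstep : ∀ m : ℕ, f ((m : ZMod n) + 1) = f (m : ZMod n) - 1 := by
        intro m
        induction m with
        | zero => simpa using hd
        | succ m ih =>
          have hc : ((m+1 : ℕ) : ZMod n) = (m : ZMod n) + 1 := by push_cast; ring
          rw [hc]
          exact hdir' _ ih
      have haff : ∀ m : ℕ, f (m : ZMod n) = f 0 - (m : ZMod n) := by
        intro m
        induction m with
        | zero => simp
        | succ m ih =>
          have hc : ((m+1 : ℕ) : ZMod n) = (m : ZMod n) + 1 := by push_cast; ring
          rw [hc, hstep m, ih]; ring
      have haffall : ∀ k : ZMod n, f k = f 0 - k := by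
        intro k
        have h := haff k.val
        rwa [ZMod.natCast_zmod_val] at h
      have hvdvd : 2 ∣ (f 0).val := Nat.dvd_of_mod_eq_zero hveven
      have hbb : ((((f 0).val / 2 : ℕ)) : ZMod n) + (((f 0).val / 2 : ℕ) : ZMod n) = f 0 := by
        have h1 : ((f 0).val / 2) * 2 = (f 0).val := Nat.div_mul_cancel hvdvd
        calc ((((f 0).val / 2 : ℕ)) : ZMod n) + (((f 0).val / 2 : ℕ) : ZMod n)
            = (((f 0).val / 2 * 2 : ℕ) : ZMod n) := by push_cast; ring
          _ = (((f 0).val : ℕ) : ZMod n) := by rw [h1]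
          _ = f 0 := ZMod.natCast_zmod_val _
      have hfixb : f (((f 0).val / 2 : ℕ) : ZMod n) = (((f 0).val / 2 : ℕ) : ZMod n) := by
        rw [haffall]; linear_combination -hbb
      exact hfnofix _ hfixb
  · -- Case A : some vertex of the cycle has its ι-image off the cycle
    push_neg at honto
    obtain ⟨k0, hk0⟩ := honto
    have hPz : P (φ (ik k0)) (ψ (jk k0)) = 0 := by
      simp only [hPdef]
      refine Finset.sum_eq_zero fun k _ => ?_
      rw [if_neg]
      rintro ⟨hi, hj⟩
      rcases hk k0 with ⟨g1, g2⟩ | ⟨g1, g2⟩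
      · have hni : ∀ l, z l ≠ Sum.inl (φ (ik k0)) := by
          intro l hl
          exact hk0 l (by rw [hl, g1]; simp)
        rcases (hik_iff k _).1 hi with h | h
        · exact hni _ h
        · exact hni _ h
      · have hnj : ∀ l, z l ≠ Sum.inr (ψ (jk k0)) := by
          intro l hl
          exact hk0 l (by rw [hl, g1]; simp)
        rcases (hjk_iff k _).1 hj with h | h
        · exact hnj _ h
        · exact hnj _ h
    have hP' : P (φ (φ (ik k0))) (ψ (ψ (jk k0))) = σ k0 := by
      rw [hφ2, hψ2]; exact hPedge k0
    have hzero := key (φ (ik k0)) (ψ (jk k0))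
    simp only [hQdef] at hzero
    rw [hPz, hP'] at hzero
    rw [zero_add] at hzero
    exact hσne k0 hzero
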